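/- arXiv:2203.13820 — 2 statements merged into one kernel-verified Lean document; each statement's English description precedes it below -/
import Mathlib

section
/- Let B be a standard Brownian motion on [0,T] and (π^n) a sequence of partitions of [0,T] with |π^n| log n → 0. Then almost surely, for all t ∈ [0,T], the sums Σ_{π^n ∩ [0,t]} (B(t^n_{i+1}) - B(t^n_i))^2 converge to t; that is, B has quadratic variation [B]^{(2)}_π(t) = t along π almost surely. -/
/-!
Along a partition with cells of length `Δᵢ ≤ δ`, the quadratic-variation sum up to `s` is a sum
of independent squares `Xᵢ²` with `Xᵢ ∼ N(0, Δᵢ)`, and its mean `∑ Δᵢ` lies in `[s, s + δ]`.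
Since `E exp(c X²) = (1 - 2cΔ)^{-1/2} ≤ exp(cΔ + 4c²Δ²)` for `cΔ ≤ 1/4`, a Chernoff bound shows that
the sum deviates from its mean by `ε` with probability at most `2 exp(-ε² / (16 δ T))`. When
`δₙ log n → 0` this is eventually at most `2 / n²`, so Borel–Cantelli gives almost sure
convergence for each fixed `s`. The sums are monotone in `s`, so convergence on a countable dense
set of times, endpoints included, gives convergence for all `s ∈ [0, T]` at once.
-/

open Filter Finset Set MeasureTheory ProbabilityTheory

/-- A standard Brownian motion (Wiener process) on a probability space: continuous paths started
at `0`, with independent Gaussian increments of variance equal to the time increment. -/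
def IsBrownianMotion {Ω : Type*} [MeasureSpace Ω] (B : ℝ → Ω → ℝ) : Prop :=
  IsProbabilityMeasure (ℙ : Measure Ω) ∧
  (∀ s, Measurable (B s)) ∧
  (∀ ω, Continuous fun s => B s ω) ∧
  (∀ ω, B 0 ω = 0) ∧
  (∀ s u : ℝ, 0 ≤ s → s ≤ u →
    Measure.map (fun ω => B u ω - B s ω) ℙ = gaussianReal 0 (Real.toNNReal (u - s))) ∧
  (∀ (m : ℕ) (s : ℕ → ℝ), Monotone s → (∀ i, 0 ≤ s i) →
    iIndepFun
      (fun (i : Fin m) ω => B (s (i.1 + 1)) ω - B (s i.1) ω) ℙ)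

open Real
open scoped NNReal ENNReal Topology

lemma inv_sqrt_one_sub_le_exp {u : ℝ} (hu : u ≤ 1 / 2) :
    (√(1 - u))⁻¹ ≤ exp (u / 2 + u ^ 2) := by
  have h1 : 0 < 1 - u := by linarith
  rw [show exp (u / 2 + u ^ 2) = √(exp (u + 2 * u ^ 2)) by
    rw [← exp_half]; ring_nf, ← Real.sqrt_inv]
  refine sqrt_le_sqrt ((inv_le_iff_one_le_mul₀ h1).2 ?_)
  nlinarith [add_one_le_exp (u + 2 * u ^ 2), sq_nonneg u, sq_nonneg (u * (1 - 2 * u))]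

lemma integral_exp_mul_sq_gaussianReal (v : ℝ≥0) {c : ℝ} (h : 2 * c * v < 1) :
    ∫ x, exp (c * x ^ 2) ∂gaussianReal 0 v = (√(1 - 2 * c * v))⁻¹ := by
  rcases eq_or_ne v 0 with rfl | hv
  · simp [gaussianReal_zero_var]
  have hv' : (0 : ℝ) < v := NNReal.coe_pos.2 (pos_iff_ne_zero.2 hv)
  have hpdf : ∀ x, gaussianPDFReal 0 v x • exp (c * x ^ 2)
      = (√(2 * π * v))⁻¹ * exp (-((1 - 2 * c * v) / (2 * v)) * x ^ 2) := by
    intro x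
    rw [gaussianPDFReal, smul_eq_mul, mul_assoc, ← exp_add]
    congr 2
    field_simp
    ring
  rw [integral_gaussianReal_eq_integral_smul hv]
  simp only [hpdf]
  have hsqrt : √(2 * π * v) ≠ 0 := (Real.sqrt_pos.2 (by positivity)).ne'
  rw [integral_const_mul, integral_gaussian,
    show π / ((1 - 2 * c * v) / (2 * v)) = 2 * π * v / (1 - 2 * c * v) by field_simp,
    sqrt_div' _ (by linarith)]
  field_simp

section SumOfSquares

variable {Ω ι : Type*} {mΩ : MeasurableSpace Ω} {μ : Measure Ω}

lemma mgf_sq_eq_integral_gaussianReal {X : Ω → ℝ} (hX : Measurable X) {v : ℝ≥0}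
    (hlaw : μ.map X = gaussianReal 0 v) (c : ℝ) :
    mgf (fun ω => X ω ^ 2) μ c = ∫ x, exp (c * x ^ 2) ∂gaussianReal 0 v := by
  rw [mgf, ← hlaw, integral_map hX.aemeasurable (by fun_prop)]

lemma integrable_exp_mul_sq_of_map_eq_gaussianReal {X : Ω → ℝ} (hX : Measurable X) {v : ℝ≥0}
    (hlaw : μ.map X = gaussianReal 0 v) {c : ℝ} (h : 2 * c * v < 1) :
    Integrable (fun ω => exp (c * X ω ^ 2)) μ := by
  have hint : Integrable (fun x => exp (c * x ^ 2)) (μ.map X) := by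
    refine .of_integral_ne_zero ?_
    rw [hlaw, integral_exp_mul_sq_gaussianReal v h]
    exact (inv_pos.2 (Real.sqrt_pos.2 (by linarith))).ne'
  exact (integrable_map_measure (by fun_prop) hX.aemeasurable).1 hint

lemma mgf_sq_le_of_map_eq_gaussianReal {X : Ω → ℝ} (hX : Measurable X) {v : ℝ≥0}
    (hlaw : μ.map X = gaussianReal 0 v) {c : ℝ} (h : c * v ≤ 1 / 4) :
    mgf (fun ω => X ω ^ 2) μ c ≤ exp (c * v + 4 * c ^ 2 * v ^ 2) := by
  rw [mgf_sq_eq_integral_gaussianReal hX hlaw, integral_exp_mul_sq_gaussianReal v (by linarith)]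
  calc (√(1 - 2 * c * v))⁻¹ ≤ exp (2 * c * v / 2 + (2 * c * v) ^ 2) :=
        inv_sqrt_one_sub_le_exp (by linarith)
    _ = exp (c * v + 4 * c ^ 2 * v ^ 2) := by ring_nf

lemma mgf_sum_sq_le {X : ι → Ω → ℝ} (hXm : ∀ i, Measurable (X i)) (hX : iIndepFun X μ)
    {v : ι → ℝ≥0} (hlaw : ∀ i, μ.map (X i) = gaussianReal 0 (v i)) {s : Finset ι} {c δ : ℝ}
    (hvδ : ∀ i ∈ s, (v i : ℝ) ≤ δ) (hcv : ∀ i ∈ s, c * v i ≤ 1 / 4) :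
    mgf (fun ω => ∑ i ∈ s, X i ω ^ 2) μ c
      ≤ exp (c * ∑ i ∈ s, (v i : ℝ) + 4 * c ^ 2 * δ * ∑ i ∈ s, (v i : ℝ)) := by
  have hY : iIndepFun (fun i ω => X i ω ^ 2) μ := hX.comp (fun _ x => x ^ 2) (fun _ => by fun_prop)
  rw [← Finset.sum_fn, hY.mgf_sum (fun i => by fun_prop)]
  calc ∏ i ∈ s, mgf (fun ω => X i ω ^ 2) μ c
      ≤ ∏ i ∈ s, exp (c * v i + 4 * c ^ 2 * (v i : ℝ) ^ 2) :=
        prod_le_prod (fun _ _ => mgf_nonneg)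
          (fun i hi => mgf_sq_le_of_map_eq_gaussianReal (hXm i) (hlaw i) (hcv i hi))
    _ = exp (c * ∑ i ∈ s, (v i : ℝ) + 4 * c ^ 2 * ∑ i ∈ s, (v i : ℝ) ^ 2) := by
        rw [← exp_sum, sum_add_distrib, mul_sum, mul_sum]
    _ ≤ exp (c * ∑ i ∈ s, (v i : ℝ) + 4 * c ^ 2 * δ * ∑ i ∈ s, (v i : ℝ)) := by
        gcongr exp (_ + ?_)
        rw [mul_assoc _ δ, mul_sum s _ δ]
        gcongr 4 * c ^ 2 * ?_
        exact sum_le_sum fun i hi => by nlinarith [hvδ i hi, NNReal.coe_nonneg (v i)]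

lemma measure_le_abs_sub_le_of_mgf_le [IsFiniteMeasure μ] {S : Ω → ℝ} {m a l : ℝ} (ε : ℝ)
    (hl : 0 ≤ l)
    (hint : Integrable (fun ω => exp (l * S ω)) μ)
    (hint' : Integrable (fun ω => exp (-l * S ω)) μ)
    (hmgf : mgf S μ l ≤ exp (l * m + a * l ^ 2))
    (hmgf' : mgf S μ (-l) ≤ exp (-l * m + a * l ^ 2)) :
    μ {ω | ε ≤ |S ω - m|} ≤ ENNReal.ofReal (2 * exp (-l * ε + a * l ^ 2)) := by
  have hup : μ.real {ω | m + ε ≤ S ω} ≤ exp (-l * ε + a * l ^ 2) :=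
    calc μ.real {ω | m + ε ≤ S ω} ≤ exp (-l * (m + ε)) * mgf S μ l :=
          measure_ge_le_exp_mul_mgf _ hl hint
      _ ≤ exp (-l * (m + ε)) * exp (l * m + a * l ^ 2) := by gcongr
      _ = exp (-l * ε + a * l ^ 2) := by rw [← exp_add]; ring_nf
  have hlow : μ.real {ω | S ω ≤ m - ε} ≤ exp (-l * ε + a * l ^ 2) :=
    calc μ.real {ω | S ω ≤ m - ε} ≤ exp (- -l * (m - ε)) * mgf S μ (-l) :=
          measure_le_le_exp_mul_mgf _ (neg_nonpos.2 hl) hint'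
      _ ≤ exp (- -l * (m - ε)) * exp (-l * m + a * l ^ 2) := by gcongr
      _ = exp (-l * ε + a * l ^ 2) := by rw [← exp_add]; ring_nf
  have hsub : {ω | ε ≤ |S ω - m|} ⊆ {ω | m + ε ≤ S ω} ∪ {ω | S ω ≤ m - ε} := fun ω hω => by
    rcases le_abs'.1 (show ε ≤ |S ω - m| from hω) with h | h
    · exact Or.inr (by simp only [mem_ofPred_eq]; linarith)
    · exact Or.inl (by simp only [mem_ofPred_eq]; linarith)
  calc μ {ω | ε ≤ |S ω - m|} ≤ μ {ω | m + ε ≤ S ω} + μ {ω | S ω ≤ m - ε} :=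
        (measure_mono hsub).trans (measure_union_le _ _)
    _ ≤ ENNReal.ofReal (exp (-l * ε + a * l ^ 2)) + ENNReal.ofReal (exp (-l * ε + a * l ^ 2)) :=
        add_le_add (by rw [← ofReal_measureReal]; exact ENNReal.ofReal_le_ofReal hup)
          (by rw [← ofReal_measureReal]; exact ENNReal.ofReal_le_ofReal hlow)
    _ = ENNReal.ofReal (2 * exp (-l * ε + a * l ^ 2)) := by
        rw [← ENNReal.ofReal_add (by positivity) (by positivity), two_mul]

lemma measure_le_abs_sum_sq_sub_le {X : ι → Ω → ℝ} (hXm : ∀ i, Measurable (X i))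
    (hX : iIndepFun X μ)
    {v : ι → ℝ≥0} (hlaw : ∀ i, μ.map (X i) = gaussianReal 0 (v i)) {s : Finset ι} {δ V ε : ℝ}
    (hδ : 0 < δ) (hvδ : ∀ i ∈ s, (v i : ℝ) ≤ δ) (hvV : ∑ i ∈ s, (v i : ℝ) ≤ V)
    (hε : 0 < ε) (hεV : ε ≤ 2 * V) :
    μ {ω | ε ≤ |∑ i ∈ s, X i ω ^ 2 - ∑ i ∈ s, (v i : ℝ)|}
      ≤ ENNReal.ofReal (2 * exp (-ε ^ 2 / (16 * δ * V))) := by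
  have := hX.isProbabilityMeasure
  have hV : 0 < V := by linarith
  -- the Chernoff parameter `l` optimises `-l ε + 4 δ V l²`
  set l := ε / (8 * δ * V) with hl
  have hl0 : 0 ≤ l := by positivity
  have hlδ : l * δ ≤ 1 / 4 := by
    rw [hl, div_mul_eq_mul_div, div_le_iff₀ (by positivity)]
    nlinarith
  have hY : iIndepFun (fun i ω => X i ω ^ 2) μ := hX.comp (fun _ x => x ^ 2) (fun _ => by fun_prop)
  have hcv : ∀ c, c * δ ≤ 1 / 4 → ∀ i ∈ s, c * v i ≤ 1 / 4 := fun c hc i hi => by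
    rcases le_or_gt c 0 with hc0 | hc0
    · nlinarith [NNReal.coe_nonneg (v i)]
    · nlinarith [hvδ i hi]
  have hint : ∀ c, c * δ ≤ 1 / 4 → Integrable (fun ω => exp (c * ∑ i ∈ s, X i ω ^ 2)) μ := by
    intro c hc
    simpa only [Finset.sum_apply] using hY.integrable_exp_mul_sum (fun i => by fun_prop)
      fun i hi => integrable_exp_mul_sq_of_map_eq_gaussianReal (hXm i) (hlaw i)
        (by linarith [hcv c hc i hi])
  have hmgf : ∀ c, c * δ ≤ 1 / 4 → mgf (fun ω => ∑ i ∈ s, X i ω ^ 2) μ c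
      ≤ exp (c * ∑ i ∈ s, (v i : ℝ) + 4 * δ * V * c ^ 2) := fun c hc => by
    refine (mgf_sum_sq_le hXm hX hlaw hvδ (hcv c hc)).trans ?_
    have := mul_le_mul_of_nonneg_left hvV (by positivity : 0 ≤ 4 * c ^ 2 * δ)
    gcongr exp (_ + ?_)
    linarith
  have hneg : -l * δ ≤ 1 / 4 := by nlinarith
  convert measure_le_abs_sub_le_of_mgf_le ε hl0 (hint l hlδ) (hint (-l) hneg) (hmgf l hlδ)
    (by simpa only [neg_mul, neg_sq] using hmgf (-l) hneg) using 4
  rw [hl]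
  field_simp
  ring

end SumOfSquares

noncomputable def partitionSum (g : ℝ → ℝ → ℝ) (τ : ℕ → ℝ) (M : ℕ) (s : ℝ) : ℝ :=
  ∑ i ∈ range M, if τ i ≤ s then g (τ i) (τ (i + 1)) else 0

section partitionSum

variable {τ : ℕ → ℝ} {M : ℕ}

lemma partitionSum_eq_sum_filter (g : ℝ → ℝ → ℝ) (s : ℝ) :
    partitionSum g τ M s
      = ∑ i ∈ univ.filter (fun i : Fin M => τ i ≤ s), g (τ i) (τ (i + 1)) := by
  rw [sum_filter, Fin.sum_univ_eq_sum_range (fun i => if τ i ≤ s then g (τ i) (τ (i + 1)) else 0),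
    partitionSum]

lemma monotone_partitionSum {g : ℝ → ℝ → ℝ} (hg : ∀ a b, 0 ≤ g a b) :
    Monotone (partitionSum g τ M) :=
  fun _ _ hst => sum_le_sum fun i _ => by
    split_ifs with h₁ h₂
    exacts [le_rfl, absurd (h₁.trans hst) h₂, hg _ _, le_rfl]

lemma sub_le_partitionSum_sub {q : ℝ} (hq0 : τ 0 ≤ q) (hqM : q ≤ τ M) :
    q - τ 0 ≤ partitionSum (fun a b => b - a) τ M q := by
  have htel := sum_range_sub (fun i => min (τ i) q) M
  simp only [min_eq_right hqM, min_eq_left hq0] at htel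
  rw [← htel, partitionSum]
  refine sum_le_sum fun i _ => ?_
  split_ifs with h
  · rw [min_eq_left h]; linarith [min_le_left (τ (i + 1)) q]
  · rw [min_eq_right (not_le.1 h).le]; linarith [min_le_right (τ (i + 1)) q]

lemma partitionSum_sub_le {q δ : ℝ} (hτ : ∀ i < M, τ i ≤ τ (i + 1)) (hδ0 : 0 ≤ δ)
    (hδ : ∀ i < M, τ (i + 1) - τ i ≤ δ) (hq0 : τ 0 ≤ q) :
    partitionSum (fun a b => b - a) τ M q ≤ q - τ 0 + δ := by
  have htel := sum_range_sub (fun i => min (τ i) (q + δ)) M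
  simp only [min_eq_left (by linarith : τ 0 ≤ q + δ)] at htel
  calc partitionSum (fun a b => b - a) τ M q
      ≤ ∑ i ∈ range M, (min (τ (i + 1)) (q + δ) - min (τ i) (q + δ)) := by
        refine sum_le_sum fun i hi => ?_
        have hi := mem_range.1 hi
        split_ifs with h
        · rw [min_eq_left (by linarith [hδ i hi]), min_eq_left (by linarith [hτ i hi, hδ i hi])]
        · linarith [min_le_min_right (q + δ) (hτ i hi)]
    _ ≤ q - τ 0 + δ := by rw [htel]; linarith [min_le_right (τ M) (q + δ)]

end partitionSum

lemma tendsto_zero_of_tendsto_mul_log {δ : ℕ → ℝ}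
    (h : Tendsto (fun n => δ n * log n) atTop (𝓝 0)) :
    Tendsto δ atTop (𝓝 0) := by
  refine (h.div_atTop (tendsto_log_atTop.comp tendsto_natCast_atTop_atTop)).congr' ?_
  filter_upwards [eventually_ge_atTop 2] with n hn
  have : 0 < log n := log_pos (by exact_mod_cast hn)
  exact mul_div_cancel_right₀ _ this.ne'

lemma summable_exp_neg_div_of_tendsto_mul_log {δ : ℕ → ℝ} (hδ : ∀ n, 0 < δ n)
    (h : Tendsto (fun n => δ n * log n) atTop (𝓝 0)) {κ : ℝ} (hκ : 0 < κ) :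
    Summable fun n => exp (-κ / δ n) := by
  refine (summable_nat_pow_inv.2 one_lt_two).of_norm_bounded_eventually_nat ?_
  filter_upwards [(tendsto_order.1 h).2 (κ / 2) (half_pos hκ), eventually_ge_atTop 1]
    with n hn hn1
  have hlog : 2 * log n ≤ κ / δ n := by
    rw [le_div_iff₀ (hδ n)]; linarith
  rw [norm_of_nonneg (exp_nonneg _), ← exp_log (by positivity : (0 : ℝ) < (n : ℝ) ^ 2),
    ← exp_neg, log_pow, exp_le_exp, neg_div]
  push_cast
  linarith

lemma ae_tendsto_of_forall_tsum_measure_ne_top {Ω E : Type*} {mΩ : MeasurableSpace Ω}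
    {μ : Measure Ω} [PseudoMetricSpace E] {X : ℕ → Ω → E} {Y : Ω → E}
    (h : ∀ ε > 0, ∑' n, μ {ω | ε ≤ dist (X n ω) (Y ω)} ≠ ∞) :
    ∀ᵐ ω ∂μ, Tendsto (fun n => X n ω) atTop (𝓝 (Y ω)) := by
  have hk : ∀ k : ℕ, ∀ᵐ ω ∂μ, ∀ᶠ n in atTop, dist (X n ω) (Y ω) < 1 / (k + 1) := fun k =>
    (ae_eventually_notMem (h _ Nat.one_div_pos_of_nat)).mono fun _ hω =>
      hω.mono fun _ hn => not_le.1 hn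
  filter_upwards [ae_all_iff.2 hk] with ω hω
  refine Metric.tendsto_nhds.2 fun ε hε => ?_
  obtain ⟨k, hkε⟩ := exists_nat_one_div_lt hε
  exact (hω k).mono fun _ hn => hn.trans hkε

lemma tendsto_of_monotone_of_tendsto_dense {f : ℕ → ℝ → ℝ} (hf : ∀ n, Monotone (f n))
    {D : Set ℝ} (hD : ∀ r ∈ D, Tendsto (fun n => f n r) atTop (𝓝 r)) {x : ℝ}
    (hlow : ∀ y < x, ∃ r ∈ D, y < r ∧ r ≤ x) (hup : ∀ y > x, ∃ r ∈ D, x ≤ r ∧ r < y) :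
    Tendsto (fun n => f n x) atTop (𝓝 x) := by
  refine tendsto_order.2 ⟨fun y hy => ?_, fun y hy => ?_⟩
  · obtain ⟨r, hrD, hyr, hrx⟩ := hlow y hy
    exact ((tendsto_order.1 (hD r hrD)).1 y hyr).mono fun n hn => hn.trans_le (hf n hrx)
  · obtain ⟨r, hrD, hxr, hry⟩ := hup y hy
    exact ((tendsto_order.1 (hD r hrD)).2 y hry).mono fun n hn => (hf n hxr).trans_lt hn

lemma exists_countable_dense_subset_Icc {a b : ℝ} (hab : a ≤ b) :
    ∃ D ⊆ Icc a b, D.Countable ∧ ∀ x ∈ Icc a b,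
      (∀ y < x, ∃ r ∈ D, y < r ∧ r ≤ x) ∧ (∀ y > x, ∃ r ∈ D, x ≤ r ∧ r < y) := by
  refine ⟨Icc a b ∩ (range ((↑) : ℚ → ℝ) ∪ {a, b}), inter_subset_left,
    ((countable_range _).union (toFinite _).countable).mono inter_subset_right,
    fun x hx => ⟨fun y hy => ?_, fun y hy => ?_⟩⟩
  · rcases lt_or_ge y a with hya | hay
    · exact ⟨a, ⟨left_mem_Icc.2 hab, by simp⟩, hya, hx.1⟩
    · obtain ⟨r, hyr, hrx⟩ := exists_rat_btwn hy
      exact ⟨r, ⟨⟨by linarith, by linarith [hx.2]⟩, Or.inl (mem_range_self r)⟩, hyr, hrx.le⟩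
  · rcases lt_or_ge b y with hby | hyb
    · exact ⟨b, ⟨right_mem_Icc.2 hab, by simp⟩, hx.2, hby⟩
    · obtain ⟨r, hxr, hry⟩ := exists_rat_btwn hy
      exact ⟨r, ⟨⟨by linarith [hx.1], by linarith⟩, Or.inl (mem_range_self r)⟩, hxr.le, hry⟩

lemma monotone_comp_min_of_le_succ {τ : ℕ → ℝ} {M : ℕ} (hτ : ∀ i < M, τ i ≤ τ (i + 1)) :
    Monotone fun i => τ (min i M) :=
  monotone_nat_of_le_succ fun i => by
    rcases lt_or_ge i M with h | h
    · simpa only [min_eq_left h.le, min_eq_left (Nat.succ_le_of_lt h)] using hτ i h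
    · simp only [min_eq_right h, min_eq_right (h.trans i.le_succ), le_rfl]

namespace IsBrownianMotion

variable {Ω : Type*} [MeasureSpace Ω] {B : ℝ → Ω → ℝ} {M : ℕ} {τ : ℕ → ℝ}

lemma iIndepFun_increments (hB : IsBrownianMotion B) (h0 : 0 ≤ τ 0)
    (hτ : ∀ i < M, τ i ≤ τ (i + 1)) :
    iIndepFun (fun (i : Fin M) ω => B (τ (i + 1)) ω - B (τ i) ω) ℙ := by
  have hσ := monotone_comp_min_of_le_succ hτ
  convert hB.2.2.2.2.2 M _ hσ fun i => h0.trans (hσ (Nat.zero_le i)) using 4 with i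
  · rw [min_eq_left i.2]
  · rw [min_eq_left i.2.le]

lemma measure_le_abs_partitionSum_sub_le (hB : IsBrownianMotion B) (h0 : 0 ≤ τ 0)
    (hτ : ∀ i < M, τ i ≤ τ (i + 1)) {δ V ε : ℝ} (hδ0 : 0 < δ) (hδ : ∀ i < M, τ (i + 1) - τ i ≤ δ)
    (hV : τ M - τ 0 ≤ V) (hε : 0 < ε) (hεV : ε ≤ 2 * V) (q : ℝ) :
    ℙ {ω | ε ≤ |partitionSum (fun a b => (B b ω - B a ω) ^ 2) τ M q
        - partitionSum (fun a b => b - a) τ M q|}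
      ≤ ENNReal.ofReal (2 * exp (-ε ^ 2 / (16 * δ * V))) := by
  set v : Fin M → ℝ≥0 := fun i => (τ (i + 1) - τ i).toNNReal
  have hv : ∀ i : Fin M, (v i : ℝ) = τ (i + 1) - τ i := fun i =>
    Real.coe_toNNReal _ (sub_nonneg.2 (hτ i i.2))
  have hτ_nonneg : ∀ i : Fin M, 0 ≤ τ i := fun i => by
    simpa only [min_eq_left i.2.le, zero_min] using
      h0.trans (monotone_comp_min_of_le_succ hτ (Nat.zero_le i))
  have hlaw : ∀ i : Fin M, (ℙ : Measure Ω).map (fun ω => B (τ (i + 1)) ω - B (τ i) ω)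
      = gaussianReal 0 (v i) := fun i => hB.2.2.2.2.1 _ _ (hτ_nonneg i) (hτ i i.2)
  have hsum : ∑ i ∈ univ.filter (fun i : Fin M => τ i ≤ q), (v i : ℝ) ≤ V := by
    calc ∑ i ∈ univ.filter (fun i : Fin M => τ i ≤ q), (v i : ℝ) ≤ ∑ i, (v i : ℝ) :=
          sum_le_sum_of_subset_of_nonneg (filter_subset _ _) fun i _ _ => (v i).2
      _ = τ M - τ 0 := by
          rw [sum_congr rfl fun i _ => hv i,
            Fin.sum_univ_eq_sum_range (fun i => τ (i + 1) - τ i), sum_range_sub]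
      _ ≤ V := hV
  have := measure_le_abs_sum_sq_sub_le (fun i => (hB.2.1 _).sub (hB.2.1 _))
    (hB.iIndepFun_increments h0 hτ) hlaw hδ0 (fun i _ => (hv i).trans_le (hδ i i.2)) hsum hε hεV
  simpa only [partitionSum_eq_sum_filter, hv, Pi.sub_apply] using this

lemma ae_tendsto_partitionSum (hB : IsBrownianMotion B) {T : ℝ} (hT : 0 < T) {N : ℕ → ℕ}
    {t : ℕ → ℕ → ℝ}
    (ht0 : ∀ n, t n 0 = 0) (htT : ∀ n, t n (N n) = T)
    (hmono : ∀ n, ∀ i < N n, t n i ≤ t n (i + 1)) {δ : ℕ → ℝ} (hδ0 : ∀ n, 0 < δ n)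
    (hδ : ∀ n, ∀ i < N n, t n (i + 1) - t n i ≤ δ n)
    (hδlog : Tendsto (fun n => δ n * log n) atTop (𝓝 0)) {q : ℝ} (hq : q ∈ Icc 0 T) :
    ∀ᵐ ω ∂(ℙ : Measure Ω), Tendsto
      (fun n => partitionSum (fun a b => (B b ω - B a ω) ^ 2) (t n) (N n) q) atTop (𝓝 q) := by
  set C := fun n => partitionSum (fun a b => b - a) (t n) (N n) q
  have hC : Tendsto C atTop (𝓝 q) := by
    refine tendsto_of_tendsto_of_tendsto_of_le_of_le tendsto_const_nhds
      (by simpa using (tendsto_zero_of_tendsto_mul_log hδlog).const_add q) (fun n => ?_) fun n => ?_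
    · simpa [ht0] using sub_le_partitionSum_sub (τ := t n) (by simpa [ht0] using hq.1)
        (by simpa [htT] using hq.2)
    · simpa [ht0] using partitionSum_sub_le (hmono n) (hδ0 n).le (hδ n) (by simpa [ht0] using hq.1)
  have hdiff : ∀ᵐ ω ∂(ℙ : Measure Ω), Tendsto
      (fun n => partitionSum (fun a b => (B b ω - B a ω) ^ 2) (t n) (N n) q - C n)
      atTop (𝓝 0) := by
    refine ae_tendsto_of_forall_tsum_measure_ne_top fun ε hε => ?_
    -- the tail bound needs `ε ≤ 2 T`, and shrinking `ε` only enlarges the event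
    set ε' := min ε T
    have hε' : 0 < ε' := lt_min hε hT
    have hbound : ∀ n, (ℙ : Measure Ω) {ω | ε ≤ dist
        (partitionSum (fun a b => (B b ω - B a ω) ^ 2) (t n) (N n) q - C n) 0}
        ≤ ENNReal.ofReal (2 * exp (-(ε' ^ 2 / (16 * T)) / δ n)) := fun n => by
      refine (measure_mono fun ω (hω : ε ≤ dist _ 0) => (min_le_left ε T).trans ?_).trans
        ((hB.measure_le_abs_partitionSum_sub_le (V := T) (ε := ε') (by rw [ht0]) (hmono n)
          (hδ0 n) (hδ n) (by simp [ht0, htT]) hε' (by linarith [min_le_right ε T]) q).trans_eq ?_)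
      · simpa only [dist_zero_right, Real.norm_eq_abs] using hω
      · congr 3
        field_simp
    have hsum : Summable fun n => 2 * exp (-(ε' ^ 2 / (16 * T)) / δ n) :=
      (summable_exp_neg_div_of_tendsto_mul_log hδ0 hδlog (by positivity)).mul_left 2
    refine ne_top_of_le_ne_top ?_ (ENNReal.tsum_le_tsum hbound)
    rw [← ENNReal.ofReal_tsum_of_nonneg (fun n => by positivity) hsum]
    exact ENNReal.ofReal_ne_top
  filter_upwards [hdiff] with ω hω
  simpa using hω.add hC

end IsBrownianMotion

theorem brownian_quadratic_variation_general
    {Ω : Type*} [MeasureSpace Ω] (B : ℝ → Ω → ℝ) (hB : IsBrownianMotion B)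
    (T : ℝ) (hT : 0 < T)
    (N : ℕ → ℕ) (t : ℕ → ℕ → ℝ)
    (ht0 : ∀ n, t n 0 = 0) (htT : ∀ n, t n (N n) = T)
    (hmono : ∀ n, ∀ i < N n, t n i < t n (i + 1))
    (hmeshlog : Tendsto
      (fun n => (⨆ i : Fin (N n), (t n (i.1 + 1) - t n i.1)) * Real.log n) atTop (nhds 0)) :
    ∀ᵐ ω ∂(ℙ : Measure Ω), ∀ s ∈ Icc 0 T,
      Tendsto (fun n => ∑ i ∈ Finset.range (N n),
        if t n i ≤ s then (B (t n (i + 1)) ω - B (t n i) ω) ^ 2 else 0) atTop (nhds s) := by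
  set δ := fun n => ⨆ i : Fin (N n), (t n (i.1 + 1) - t n i.1)
  have hN : ∀ n, 0 < N n := fun n =>
    Nat.pos_of_ne_zero fun h => hT.ne' (by rw [← htT n, h, ht0 n])
  have hδ : ∀ n, ∀ i < N n, t n (i + 1) - t n i ≤ δ n := fun n i hi =>
    le_ciSup (f := fun i : Fin (N n) => t n (i.1 + 1) - t n i.1) (finite_range _).bddAbove ⟨i, hi⟩
  have hδ0 : ∀ n, 0 < δ n := fun n => (sub_pos.2 (hmono n 0 (hN n))).trans_le (hδ n 0 (hN n))
  obtain ⟨D, hDsub, hDc, hDdense⟩ := exists_countable_dense_subset_Icc hT.le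
  have hD := (ae_ball_iff hDc).2 fun r hr => hB.ae_tendsto_partitionSum hT ht0 htT
    (fun n i hi => (hmono n i hi).le) hδ0 hδ hmeshlog (hDsub hr)
  filter_upwards [hD] with ω hω s hs
  exact tendsto_of_monotone_of_tendsto_dense (fun n => monotone_partitionSum fun _ _ => sq_nonneg _)
    hω (hDdense s hs).1 (hDdense s hs).2

/-- If `B` is a Brownian motion on `[0,T]` and `(π^n)` is a sequence of partitions
with `|π^n| log n → 0`, then almost surely, for all `s ∈ [0,T]`, the quadratic variation sums of
`B` along `π^n` up to `s` converge to `s`: `[B]^{(2)}_π(s) = s`. -/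
theorem brownian_quadratic_variation
    {Ω : Type*} [MeasureSpace Ω] (B : ℝ → Ω → ℝ) (hB : IsBrownianMotion B)
    (T : ℝ) (hT : 0 < T)
    (N : ℕ → ℕ) (t : ℕ → ℕ → ℝ)
    (hN : ∀ n, 0 < N n)
    (ht0 : ∀ n, t n 0 = 0) (htT : ∀ n, t n (N n) = T)
    (hmono : ∀ n, ∀ i < N n, t n i < t n (i + 1))
    (hmesh : ∀ ε > 0, ∃ M, ∀ n ≥ M, ∀ i < N n, t n (i + 1) - t n i < ε)
    (hmeshlog : Tendsto
      (fun n => (⨆ i : Fin (N n), (t n (i.1 + 1) - t n i.1)) * Real.log n) atTop (nhds 0)) :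
    ∀ᵐ ω ∂(ℙ : Measure Ω), ∀ s ∈ Icc 0 T,
      Tendsto (fun n => ∑ i ∈ Finset.range (N n),
        if t n i ≤ s then (B (t n (i + 1)) ω - B (t n i) ω) ^ 2 else 0) atTop (nhds s) :=
  brownian_quadratic_variation_general B hB T hT N t ht0 htT hmono hmeshlog
end

section
/- Suppose x ∈ V^p_π([0,T],ℝ) with normalized p-th variation w(x,p,π)(t) = t for all t, and suppose for some q ≠ p the normalized q-th variation limit exists in [0,∞] for some t_0 ∈ (0,T]. If [x]^{(p)}_π(t_0) > 0 then w(x,q,π)(t_0) ∈ {0, ∞}: it cannot equal any value in (0,∞). -/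
open Filter Finset Set ENNReal Topology

/-!
Linearity of the normalized `p`-th variation forces the `p`-th variation `V` to be strictly
increasing: where `V` is flat every normalized term has denominator `0`, hence vanishes, and the
normalized sums could not grow there. Along partitions of vanishing mesh the increments of the
continuous path shrink uniformly, and `|Δx|^q = |Δx|^(q-p) |Δx|^p`. If `q < p`, the factor
`|Δx|^(q-p)` blows up while every interval keeps a positive amount of `p`-th variation, so every
cell carries infinite `q`-th variation and each normalized term is finite over `∞`: `ℓ = 0`. If
`q > p`, the factor tends to `0`, so every cell carries zero `q`-th variation; since `V t₀ > 0`,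
some cell below `t₀` has a nonzero increment, and its normalized term is positive over `0`:
`ℓ = ∞`.
-/

theorem ite_le_ite_of_imp {α : Type*} [Zero α] [Preorder α] {P Q : Prop} [Decidable P]
    [Decidable Q] {a : α} (ha : 0 ≤ a) (h : P → Q) :
    (if P then a else 0) ≤ if Q then a else 0 := by
  by_cases hP : P
  · rw [if_pos hP, if_pos (h hP)]
  · rw [if_neg hP]
    split_ifs
    exacts [ha, le_rfl]

theorem sum_ite_le_sub_sum_ite_le {ι : Type*} (s : Finset ι) (f t : ι → ℝ) {a b : ℝ}
    (hab : a ≤ b) :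
    (∑ i ∈ s, if t i ≤ b then f i else 0) - (∑ i ∈ s, if t i ≤ a then f i else 0) =
      ∑ i ∈ s, if a < t i ∧ t i ≤ b then f i else 0 := by
  rw [← sum_sub_distrib]
  refine sum_congr rfl fun i _ => ?_
  by_cases ha : t i ≤ a
  · simp [ha, ha.trans hab, not_lt.2 ha]
  · simp [ha, not_le.1 ha]

theorem sum_ite_ofReal_abs_rpow {ι : Type*} (s : Finset ι) (P : ι → Prop) [DecidablePred P]
    (u : ι → ℝ) (q : ℝ) :
    ∑ i ∈ s, (if P i then ENNReal.ofReal (|u i| ^ q) else 0) =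
      ENNReal.ofReal (∑ i ∈ s, if P i then |u i| ^ q else 0) := by
  rw [ENNReal.ofReal_sum_of_nonneg fun i _ => by positivity]
  exact sum_congr rfl fun i _ => by split_ifs <;> simp

theorem rpow_le_rpow_sub_mul_rpow {u m r s : ℝ} (hu : 0 ≤ u) (hum : u ≤ m) (hrs : r ≤ s)
    (hs : 0 < s) : u ^ s ≤ m ^ (s - r) * u ^ r := by
  rcases hu.eq_or_lt with rfl | hu
  · rw [Real.zero_rpow hs.ne']
    exact mul_nonneg (Real.rpow_nonneg hum _) (Real.rpow_nonneg le_rfl _)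
  · calc u ^ s = u ^ (s - r) * u ^ r := by rw [← Real.rpow_add hu, sub_add_cancel]
      _ ≤ m ^ (s - r) * u ^ r := by gcongr

theorem tendsto_atTop_of_le_rpow_mul {α : Type*} {l : Filter α} {m L Q : α → ℝ} {k L₀ : ℝ}
    (hk : 0 < k) (hm : Tendsto m l (𝓝 0)) (hm0 : ∀ n, 0 ≤ m n) (hL : Tendsto L l (𝓝 L₀))
    (hL₀ : 0 < L₀) (h : ∀ᶠ n in l, L n ≤ m n ^ k * Q n) : Tendsto Q l atTop := by
  have hmk : Tendsto (fun n => m n ^ k) l (𝓝[>] 0) := by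
    refine tendsto_nhdsWithin_iff.2
      ⟨by simpa [Real.zero_rpow hk.ne'] using hm.rpow_const (.inr hk.le), ?_⟩
    filter_upwards [h, hL.eventually (eventually_gt_nhds hL₀)] with n hn hLn
    refine (Real.rpow_nonneg (hm0 n) k).lt_of_ne fun h0 => ?_
    rw [← h0, zero_mul] at hn
    linarith
  refine tendsto_atTop_mono' l ?_ (hL.pos_mul_atTop hL₀ hmk.inv_tendsto_nhdsGT_zero)
  filter_upwards [h, hmk self_mem_nhdsWithin] with n hn hpos
  rw [Pi.inv_apply, ← div_eq_mul_inv, div_le_iff₀ hpos, mul_comm]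
  exact hn

noncomputable def maxIncrement (x : ℝ → ℝ) (t : ℕ → ℝ) (N : ℕ) : ℝ :=
  ⨆ i : Fin N, |x (t (i + 1)) - x (t i)|

section maxIncrement

variable {x : ℝ → ℝ} {t : ℕ → ℝ} {N : ℕ}

theorem maxIncrement_nonneg : 0 ≤ maxIncrement x t N :=
  Real.iSup_nonneg fun _ => abs_nonneg _

theorem abs_sub_le_maxIncrement {i : ℕ} (hi : i < N) :
    |x (t (i + 1)) - x (t i)| ≤ maxIncrement x t N :=
  le_ciSup (f := fun i : Fin N => |x (t (i + 1)) - x (t i)|) (Set.finite_range _).bddAbove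
    ⟨i, hi⟩

theorem maxIncrement_le {ε : ℝ} (hε : 0 ≤ ε) (h : ∀ i < N, |x (t (i + 1)) - x (t i)| ≤ ε) :
    maxIncrement x t N ≤ ε :=
  Real.iSup_le (fun i => h i i.2) hε

theorem sum_ite_rpow_le_maxIncrement_rpow_mul (P : ℕ → Prop) [DecidablePred P] {r s : ℝ}
    (hrs : r ≤ s) (hs : 0 < s) :
    (∑ i ∈ range N, if P i then |x (t (i + 1)) - x (t i)| ^ s else 0) ≤
      maxIncrement x t N ^ (s - r) *
        ∑ i ∈ range N, if P i then |x (t (i + 1)) - x (t i)| ^ r else 0 := by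
  rw [mul_sum]
  refine sum_le_sum fun i hi => ?_
  split_ifs
  · exact rpow_le_rpow_sub_mul_rpow (abs_nonneg _) (abs_sub_le_maxIncrement (mem_range.1 hi))
      hrs hs
  · simp

theorem exists_ne_of_sum_ite_rpow_pos {p s : ℝ} (hp : p ≠ 0)
    (h : 0 < ∑ i ∈ range N, if t i ≤ s then |x (t (i + 1)) - x (t i)| ^ p else 0) :
    ∃ i < N, t i ≤ s ∧ x (t (i + 1)) ≠ x (t i) := by
  obtain ⟨i, hi, hne⟩ := exists_ne_zero_of_sum_ne_zero h.ne'
  rw [ite_ne_right_iff] at hne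
  refine ⟨i, mem_range.1 hi, hne.1, fun hx => hne.2 ?_⟩
  rw [hx, sub_self, abs_zero, Real.zero_rpow hp]

end maxIncrement

structure IsPartitionSeq (T : ℝ) (N : ℕ → ℕ) (t : ℕ → ℕ → ℝ) : Prop where
  zero : ∀ n, t n 0 = 0
  last : ∀ n, t n (N n) = T
  lt_succ : ∀ n, ∀ i < N n, t n i < t n (i + 1)
  mesh : ∀ ε > 0, ∃ M, ∀ n ≥ M, ∀ i < N n, t n (i + 1) - t n i < ε

namespace IsPartitionSeq

variable {T : ℝ} {N : ℕ → ℕ} {t : ℕ → ℕ → ℝ}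

theorem mem_Icc (hπ : IsPartitionSeq T N t) {n i : ℕ} (hi : i ≤ N n) : t n i ∈ Icc 0 T := by
  have hmono : MonotoneOn (t n) (Set.Iic (N n)) :=
    (strictMonoOn_Iic_of_lt_succ fun i hi => by
      rw [Order.succ_eq_add_one]
      exact hπ.lt_succ n i hi).monotoneOn
  constructor
  · simpa [hπ.zero n] using hmono (mem_Iic.2 (Nat.zero_le _)) (mem_Iic.2 hi) (Nat.zero_le i)
  · simpa [hπ.last n] using hmono (mem_Iic.2 hi) (mem_Iic.2 le_rfl) hi

theorem eventually_lt_add (hπ : IsPartitionSeq T N t) {δ : ℝ} (hδ : 0 < δ) :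
    ∀ᶠ n in atTop, ∀ i < N n, t n (i + 1) < t n i + δ := by
  obtain ⟨M, hM⟩ := hπ.mesh δ hδ
  exact eventually_atTop.2 ⟨M, fun n hn i hi => by linarith [hM n hn i hi]⟩

theorem tendsto_maxIncrement (hπ : IsPartitionSeq T N t) {x : ℝ → ℝ}
    (hx : ContinuousOn x (Icc 0 T)) :
    Tendsto (fun n => maxIncrement x (t n) (N n)) atTop (𝓝 0) := by
  refine Metric.tendsto_nhds.2 fun ε hε => ?_
  obtain ⟨δ, hδ, hxδ⟩ := Metric.uniformContinuousOn_iff.1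
    (isCompact_Icc.uniformContinuousOn_of_continuous hx) (ε / 2) (half_pos hε)
  filter_upwards [hπ.eventually_lt_add hδ] with n hn
  have hle : maxIncrement x (t n) (N n) ≤ ε / 2 := by
    refine maxIncrement_le (half_pos hε).le fun i hi => ?_
    have hdist : dist (t n (i + 1)) (t n i) < δ := by
      rw [Real.dist_eq, abs_of_pos (sub_pos.2 (hπ.lt_succ n i hi))]
      linarith [hn i hi]
    exact (hxδ _ (hπ.mem_Icc hi) _ (hπ.mem_Icc hi.le) hdist).le
  rw [Real.dist_0_eq_abs, abs_of_nonneg maxIncrement_nonneg]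
  linarith

theorem strictMonoOn_of_tendsto_sum_div (hπ : IsPartitionSeq T N t) {V : ℝ → ℝ}
    (hVm : MonotoneOn V (Icc 0 T)) (f : ℕ → ℕ → ℝ)
    (hw : ∀ s ∈ Icc 0 T, Tendsto (fun n => ∑ i ∈ range (N n),
      if t n i ≤ s then f n i / (V (t n (i + 1)) - V (t n i)) * (t n (i + 1) - t n i)
      else 0) atTop (𝓝 s)) :
    StrictMonoOn V (Icc 0 T) := by
  intro c hc d hd hcd
  by_contra! hdc
  have hconst : ∀ s ∈ Icc c d, V s = V c := fun s hs =>
    le_antisymm ((hVm ⟨hc.1.trans hs.1, hs.2.trans hd.2⟩ hd hs.2).trans hdc)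
      (hVm hc ⟨hc.1.trans hs.1, hs.2.trans hd.2⟩ hs.1)
  obtain ⟨m, hcm, hmd⟩ := exists_between hcd
  have hm : m ∈ Icc 0 T := ⟨hc.1.trans hcm.le, hmd.le.trans hd.2⟩
  -- the sums at `m` and at `c` differ by terms over cells inside `[c, d]`, which are `_ / 0 = 0`
  have hmc : m - c = 0 := by
    refine tendsto_nhds_unique ((hw m hm).sub (hw c hc)) (tendsto_const_nhds.congr' ?_)
    filter_upwards [hπ.eventually_lt_add (sub_pos.2 hmd)] with n hn
    rw [sum_ite_le_sub_sum_ite_le _ _ _ hcm.le]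
    refine (sum_eq_zero fun i hi => ite_eq_right_iff.2 fun hci => ?_).symm
    have hi := mem_range.1 hi
    have hlt := hπ.lt_succ n i hi
    rw [hconst _ ⟨hci.1.le, by linarith⟩, hconst _ ⟨by linarith, by linarith [hn i hi]⟩,
      sub_self, _root_.div_zero, zero_mul]
  exact (sub_pos.2 hcm).ne' hmc

theorem tendsto_sum_rpow_atTop_of_lt (hπ : IsPartitionSeq T N t) {x V : ℝ → ℝ}
    (hx : ContinuousOn x (Icc 0 T)) {p q : ℝ} (hp : 0 < p) (hqp : q < p)
    (hV : StrictMonoOn V (Icc 0 T))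
    (hconv : ∀ s ∈ Icc 0 T, Tendsto (fun n => ∑ i ∈ range (N n),
      if t n i ≤ s then |x (t n (i + 1)) - x (t n i)| ^ p else 0) atTop (𝓝 (V s)))
    {a b : ℝ} (ha : 0 ≤ a) (hab : a < b) (hbT : b ≤ T) :
    Tendsto (fun n => ∑ i ∈ range (N n), if a ≤ t n i ∧ t n (i + 1) ≤ b then
      |x (t n (i + 1)) - x (t n i)| ^ q else 0) atTop atTop := by
  obtain ⟨c, hac, hcb⟩ := exists_between hab
  have haI : a ∈ Icc 0 T := ⟨ha, hab.le.trans hbT⟩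
  have hcI : c ∈ Icc 0 T := ⟨ha.trans hac.le, hcb.le.trans hbT⟩
  -- the `p`-sums over `[a, b]` stay above `V c - V a > 0`, while all increments shrink to `0`
  refine tendsto_atTop_of_le_rpow_mul (sub_pos.2 hqp) (hπ.tendsto_maxIncrement hx)
    (fun _ => maxIncrement_nonneg) ((hconv c hcI).sub (hconv a haI))
    (sub_pos.2 (hV haI hcI hac)) ?_
  filter_upwards [hπ.eventually_lt_add (sub_pos.2 hcb)] with n hn
  rw [sum_ite_le_sub_sum_ite_le _ _ _ hac.le]
  refine le_trans (sum_le_sum fun i hi => ite_le_ite_of_imp (by positivity) fun hi' => ?_)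
    (sum_ite_rpow_le_maxIncrement_rpow_mul _ hqp.le hp)
  exact ⟨hi'.1.le, by linarith [hn i (mem_range.1 hi)]⟩

theorem tendsto_sum_rpow_zero_of_gt (hπ : IsPartitionSeq T N t) {x : ℝ → ℝ}
    (hx : ContinuousOn x (Icc 0 T)) {p q : ℝ} (hq : 0 < q) (hpq : p < q) {a b v : ℝ}
    (hconv : Tendsto (fun n => ∑ i ∈ range (N n),
      if t n i ≤ b then |x (t n (i + 1)) - x (t n i)| ^ p else 0) atTop (𝓝 v)) :
    Tendsto (fun n => ∑ i ∈ range (N n), if a ≤ t n i ∧ t n (i + 1) ≤ b then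
      |x (t n (i + 1)) - x (t n i)| ^ q else 0) atTop (𝓝 0) := by
  have hbound :=
    ((hπ.tendsto_maxIncrement hx).rpow_const (.inr (sub_pos.2 hpq).le)).mul hconv
  rw [Real.zero_rpow (sub_pos.2 hpq).ne', zero_mul] at hbound
  refine squeeze_zero' (Eventually.of_forall fun n => sum_nonneg fun i _ => by positivity)
    (Eventually.of_forall fun n => ?_) hbound
  refine (sum_ite_rpow_le_maxIncrement_rpow_mul _ hpq.le hq).trans ?_
  refine mul_le_mul_of_nonneg_left (sum_le_sum fun i hi => ?_)
    (Real.rpow_nonneg maxIncrement_nonneg _)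
  exact ite_le_ite_of_imp (by positivity) fun h =>
    (hπ.lt_succ n i (mem_range.1 hi)).le.trans h.2

end IsPartitionSeq

theorem normalized_variation_dichotomy_general
    (T p q t₀ : ℝ) (hp : 1 < p) (hqp : q ≠ p)
    (ht₀ : t₀ ∈ Ioc 0 T)
    (x : ℝ → ℝ) (hx : ContinuousOn x (Icc 0 T))
    (N : ℕ → ℕ) (t : ℕ → ℕ → ℝ)
    (ht0 : ∀ n, t n 0 = 0) (htT : ∀ n, t n (N n) = T)
    (hmono : ∀ n, ∀ i < N n, t n i < t n (i + 1))
    (hmesh : ∀ ε > 0, ∃ M, ∀ n ≥ M, ∀ i < N n, t n (i + 1) - t n i < ε)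
    (V : ℝ → ℝ) (hVm : MonotoneOn V (Icc 0 T))
    (hconv : ∀ s ∈ Icc 0 T,
      Tendsto (fun n => ∑ i ∈ Finset.range (N n),
        if t n i ≤ s then |x (t n (i + 1)) - x (t n i)| ^ p else 0) atTop (nhds (V s)))
    -- normalized `p`-th variation of `x` is linear: `w(x,p,π)(s) = s`
    (hw : ∀ s ∈ Icc 0 T,
      Tendsto (fun n => ∑ i ∈ Finset.range (N n),
        if t n i ≤ s then
          |x (t n (i + 1)) - x (t n i)| ^ p / (V (t n (i + 1)) - V (t n i))
            * (t n (i + 1) - t n i)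
        else 0) atTop (nhds s))
    -- `D a b` is the increment of the `q`-th variation of `x` over `[a,b]`, valued in `[0,∞]`
    (D : ℝ → ℝ → ℝ≥0∞)
    (hD : ∀ a b, 0 ≤ a → a < b → b ≤ T →
      Tendsto (fun n => ∑ i ∈ Finset.range (N n),
        if a ≤ t n i ∧ t n (i + 1) ≤ b then
          ENNReal.ofReal (|x (t n (i + 1)) - x (t n i)| ^ q) else 0)
        atTop (nhds (D a b)))
    -- the normalized `q`-th variation sums at `t₀` converge to `ℓ ∈ [0,∞]`
    (ℓ : ℝ≥0∞)
    (hℓ : Tendsto (fun n => ∑ i ∈ Finset.range (N n),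
        if t n i ≤ t₀ then
          ENNReal.ofReal (|x (t n (i + 1)) - x (t n i)| ^ q)
            * ENNReal.ofReal (t n (i + 1) - t n i) / D (t n i) (t n (i + 1))
        else 0) atTop (nhds ℓ)) :
    0 < V t₀ → ℓ = 0 ∨ ℓ = ⊤ := by
  intro hV₀
  have hp₀ : 0 < p := one_pos.trans hp
  have hπ : IsPartitionSeq T N t := ⟨ht0, htT, hmono, hmesh⟩
  simp only [sum_ite_ofReal_abs_rpow] at hD
  have hD_cell (n i : ℕ) (hi : i < N n) := hD (t n i) (t n (i + 1)) (hπ.mem_Icc hi.le).1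
    (hmono n i hi) (hπ.mem_Icc hi).2
  rcases hqp.lt_or_gt with hqp | hpq
  · have hD_top (n i : ℕ) (hi : i < N n) : D (t n i) (t n (i + 1)) = ⊤ :=
      tendsto_nhds_unique (hD_cell n i hi) <| ENNReal.tendsto_ofReal_atTop.comp <|
        hπ.tendsto_sum_rpow_atTop_of_lt hx hp₀ hqp (hπ.strictMonoOn_of_tendsto_sum_div hVm _ hw)
          hconv (hπ.mem_Icc hi.le).1 (hmono n i hi) (hπ.mem_Icc hi).2
    refine .inl (tendsto_nhds_unique hℓ (tendsto_const_nhds.congr fun n => ?_))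
    refine (sum_eq_zero fun i hi => ite_eq_right_iff.2 fun _ => ?_).symm
    rw [hD_top n i (mem_range.1 hi), ENNReal.div_top]
  · have hD_zero (n i : ℕ) (hi : i < N n) : D (t n i) (t n (i + 1)) = 0 :=
      tendsto_nhds_unique (hD_cell n i hi) <| by
        simpa using ENNReal.tendsto_ofReal <| hπ.tendsto_sum_rpow_zero_of_gt hx
          (hp₀.trans hpq) hpq (a := t n i) (hconv _ (hπ.mem_Icc hi))
    refine .inr (tendsto_nhds_unique hℓ (tendsto_const_nhds.congr' ?_))
    filter_upwards [(hconv t₀ ⟨ht₀.1.le, ht₀.2⟩).eventually (eventually_gt_nhds hV₀)] with n hn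
    obtain ⟨i, hi, hit, hxi⟩ := exists_ne_of_sum_ite_rpow_pos hp₀.ne' hn
    refine (ENNReal.sum_eq_top.2 ⟨i, mem_range.2 hi, ?_⟩).symm
    rw [if_pos hit, hD_zero n i hi]
    exact ENNReal.div_zero (mul_ne_zero
      (ENNReal.ofReal_pos.2 (Real.rpow_pos_of_pos (abs_pos.2 (sub_ne_zero.2 hxi)) q)).ne'
      (ENNReal.ofReal_pos.2 (sub_pos.2 (hmono n i hi))).ne')

/-- Sharpness of the normalized variation statistic. If `x ∈ V^p_π` has normalized
`p`-th variation `w(x,p,π)(s) = s`, and for some `q ≠ p` the normalized `q`-th variation sums at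
some `t₀ ∈ (0,T]` converge to a limit `ℓ ∈ [0,∞]`, then whenever `[x]^{(p)}_π(t₀) > 0` the limit
`ℓ` is `0` or `∞`: it cannot lie in `(0,∞)`. -/
theorem normalized_variation_dichotomy
    (T p q t₀ : ℝ) (hT : 0 < T) (hp : 1 < p) (hq1 : 1 ≤ q) (hqp : q ≠ p)
    (ht₀ : t₀ ∈ Ioc 0 T)
    (x : ℝ → ℝ) (hx : ContinuousOn x (Icc 0 T))
    (N : ℕ → ℕ) (t : ℕ → ℕ → ℝ)
    (hN : ∀ n, 0 < N n)
    (ht0 : ∀ n, t n 0 = 0) (htT : ∀ n, t n (N n) = T)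
    (hmono : ∀ n, ∀ i < N n, t n i < t n (i + 1))
    (hmesh : ∀ ε > 0, ∃ M, ∀ n ≥ M, ∀ i < N n, t n (i + 1) - t n i < ε)
    (V : ℝ → ℝ) (hVc : ContinuousOn V (Icc 0 T)) (hVm : MonotoneOn V (Icc 0 T))
    (hconv : ∀ s ∈ Icc 0 T,
      Tendsto (fun n => ∑ i ∈ Finset.range (N n),
        if t n i ≤ s then |x (t n (i + 1)) - x (t n i)| ^ p else 0) atTop (nhds (V s)))
    -- normalized `p`-th variation of `x` is linear: `w(x,p,π)(s) = s`
    (hw : ∀ s ∈ Icc 0 T,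
      Tendsto (fun n => ∑ i ∈ Finset.range (N n),
        if t n i ≤ s then
          |x (t n (i + 1)) - x (t n i)| ^ p / (V (t n (i + 1)) - V (t n i))
            * (t n (i + 1) - t n i)
        else 0) atTop (nhds s))
    -- `D a b` is the increment of the `q`-th variation of `x` over `[a,b]`, valued in `[0,∞]`
    (D : ℝ → ℝ → ℝ≥0∞)
    (hD : ∀ a b, 0 ≤ a → a < b → b ≤ T →
      Tendsto (fun n => ∑ i ∈ Finset.range (N n),
        if a ≤ t n i ∧ t n (i + 1) ≤ b then
          ENNReal.ofReal (|x (t n (i + 1)) - x (t n i)| ^ q) else 0)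
        atTop (nhds (D a b)))
    -- the normalized `q`-th variation sums at `t₀` converge to `ℓ ∈ [0,∞]`
    (ℓ : ℝ≥0∞)
    (hℓ : Tendsto (fun n => ∑ i ∈ Finset.range (N n),
        if t n i ≤ t₀ then
          ENNReal.ofReal (|x (t n (i + 1)) - x (t n i)| ^ q)
            * ENNReal.ofReal (t n (i + 1) - t n i) / D (t n i) (t n (i + 1))
        else 0) atTop (nhds ℓ)) :
    0 < V t₀ → ℓ = 0 ∨ ℓ = ⊤ :=
  normalized_variation_dichotomy_general T p q t₀ hp hqp ht₀ x hx N t ht0 htT hmono hmesh V hVm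
    hconv hw D hD ℓ hℓ
end
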